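/- arXiv:1804.08216 — 3 statements merged into one kernel-verified Lean document; each statement's English description precedes it below -/
import Mathlib

section
/- Let a, b > 0 and K > 0 with ab = K, and let R > 0 with K - R > 0. Suppose a', b' > 0 satisfy a'b' > K - R. Then 2ab - a'b - ab' ≤ 2R. -/
/-- Second case of the algebraic estimate in Theorem 4.2: if `ab = K > 0`,
`0 < R`, `K - R > 0` and `a'b' > K - R` with `a', b' > 0`, then
`2ab - a'b - ab' ≤ 2R`. -/
theorem stmt1 (a b a' b' K R : ℝ) (ha : 0 < a) (hb : 0 < b) (hK : 0 < K)
    (hab : a * b = K) (hR : 0 < R) (hKR : 0 < K - R)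
    (ha' : 0 < a') (hb' : 0 < b') (hab' : a' * b' > K - R) :
    2 * a * b - a' * b - a * b' ≤ 2 * R := by
  nlinarith [sq_nonneg (a' * b - a * b'), sq_nonneg (a' * b + a * b' - 2 * (K - R)),
    mul_pos (mul_pos ha' hb) (mul_pos ha hb'), mul_pos ha' hb, mul_pos ha hb',
    mul_pos hR (mul_pos ha' hb'), mul_lt_mul_of_pos_left hab' hK]
end

section
/- If A and B are positive definite symmetric 2×2 real matrices with det(A) = det(B), then det(A - B) ≤ 0, with equality if and only if A = B. -/
/-!
Write `A = [[a, b], [b, c]]`, `B = [[p, q], [q, r]]` and `d = det A = det B`. Expanding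
`det (A - B) = (a - p)(c - r) - (b - q)²` and eliminating `c` and `r` through `ac = d + b²`,
`pr = d + q²` gives

  `a p · det (A - B) = -(d (a - p)² + (a q - p b)²)`.

Positive definiteness makes `a`, `p` and `d` positive, so the right side is `≤ 0`, and it
vanishes only when `a = p` and `q = b`; then `c = r` follows from `ac - b² = pr - q²`.
-/

namespace Matrix

variable {R : Type*} [CommRing R] {A B : Matrix (Fin 2) (Fin 2) R}

theorem IsSymm.mul_det_sub_of_det_eq_fin_two (hA : A.IsSymm) (hB : B.IsSymm)
    (hdet : A.det = B.det) :
    A 0 0 * B 0 0 * (A - B).det =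
      -(A.det * (A 0 0 - B 0 0) ^ 2 + (A 0 0 * B 0 1 - B 0 0 * A 0 1) ^ 2) := by
  have hdetA := A.det_fin_two
  have hdetB := B.det_fin_two
  rw [hA.apply 0 1] at hdetA
  rw [hB.apply 0 1] at hdetB
  rw [det_fin_two]
  simp only [sub_apply, hA.apply 0 1, hB.apply 0 1]
  linear_combination (B 0 0 ^ 2 - A 0 0 * B 0 0) * hdetA +
    (A 0 0 ^ 2 - A 0 0 * B 0 0) * (hdetB + hdet)

theorem IsSymm.eq_of_det_eq_fin_two [IsDomain R] (hA : A.IsSymm) (hB : B.IsSymm)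
    (h₀₀ : A 0 0 = B 0 0) (h₀₁ : A 0 1 = B 0 1) (hA₀₀ : A 0 0 ≠ 0) (hdet : A.det = B.det) :
    A = B := by
  have h₁₁ : A 1 1 = B 1 1 := by
    refine mul_left_cancel₀ hA₀₀ ?_
    rw [det_fin_two, det_fin_two, hA.apply 0 1, hB.apply 0 1] at hdet
    linear_combination hdet - B 1 1 * h₀₀ + (A 0 1 + B 0 1) * h₀₁
  rw [eta_fin_two A, eta_fin_two B, hA.apply 0 1, hB.apply 0 1, h₀₀, h₀₁, h₁₁]

end Matrix

/-- For positive definite symmetric 2×2 real matrices with equal determinants,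
`det (A - B) ≤ 0`, with equality iff `A = B`. -/
theorem stmt4 (A B : Matrix (Fin 2) (Fin 2) ℝ) (hA : A.PosDef) (hB : B.PosDef)
    (hdet : A.det = B.det) :
    (A - B).det ≤ 0 ∧ ((A - B).det = 0 ↔ A = B) := by
  have hAsymm : A.IsSymm := Matrix.isHermitian_iff_isSymm.mp hA.isHermitian
  have hBsymm : B.IsSymm := Matrix.isHermitian_iff_isSymm.mp hB.isHermitian
  have ha : 0 < A 0 0 := hA.diag_pos
  have hp : 0 < B 0 0 := hB.diag_pos
  have hd : 0 < A.det := hA.det_pos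
  have hidentity := hAsymm.mul_det_sub_of_det_eq_fin_two hBsymm hdet
  refine ⟨nonpos_of_mul_nonpos_right ?_ (mul_pos ha hp), fun h0 => ?_, ?_⟩
  · rw [hidentity, neg_nonpos]
    positivity
  · rw [h0, mul_zero, zero_eq_neg] at hidentity
    obtain ⟨hsq₀₀, hsq₀₁⟩ := (add_eq_zero_iff_of_nonneg (by positivity) (sq_nonneg _)).mp hidentity
    have h₀₀ : A 0 0 = B 0 0 :=
      sub_eq_zero.mp (pow_eq_zero_iff two_ne_zero |>.mp ((mul_eq_zero.mp hsq₀₀).resolve_left hd.ne'))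
    have h₀₁ : A 0 1 = B 0 1 := by
      refine mul_left_cancel₀ ha.ne' ?_
      linear_combination -(pow_eq_zero_iff two_ne_zero |>.mp hsq₀₁) + A 0 1 * h₀₀
    exact hAsymm.eq_of_det_eq_fin_two hBsymm h₀₀ h₀₁ ha.ne' hdet
  · rintro rfl
    simp
end

section
/- In a static spherically symmetric spacetime with metric -f(r)² dt² + dr²/f(r)² + r² dS², the 2-form Q = r dr ∧ dt satisfies div Q = -3 ∂/∂t, where div Q is the vector field ξ with ⟨ξ, Z⟩ = (D_{e_α} Q)(e^α, Z). -/
noncomputable section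

/-- Points of the spacetime in coordinates `(t, r, θ, φ)`. -/
abbrev SpacetimePt := Fin 4 → ℝ

/-- Coordinate partial derivative `∂_i F` at `x`. -/
def pd (i : Fin 4) (F : SpacetimePt → ℝ) (x : SpacetimePt) : ℝ :=
  deriv (fun s => F (Function.update x i s)) (x i)

/-- The static spherically symmetric metric
`g = -f(r)² dt² + f(r)⁻² dr² + r² (dθ² + sin²θ dφ²)` in components. -/
def metricg (f : ℝ → ℝ) (x : SpacetimePt) (i j : Fin 4) : ℝ :=
  if i = 0 ∧ j = 0 then -(f (x 1)) ^ 2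
  else if i = 1 ∧ j = 1 then 1 / (f (x 1)) ^ 2
  else if i = 2 ∧ j = 2 then (x 1) ^ 2
  else if i = 3 ∧ j = 3 then (x 1) ^ 2 * (Real.sin (x 2)) ^ 2
  else 0

/-- The inverse metric in components. -/
def metricgInv (f : ℝ → ℝ) (x : SpacetimePt) (i j : Fin 4) : ℝ :=
  if i = 0 ∧ j = 0 then -(1 / (f (x 1)) ^ 2)
  else if i = 1 ∧ j = 1 then (f (x 1)) ^ 2
  else if i = 2 ∧ j = 2 then 1 / (x 1) ^ 2
  else if i = 3 ∧ j = 3 then 1 / ((x 1) ^ 2 * (Real.sin (x 2)) ^ 2)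
  else 0

/-- Christoffel symbols `Γ^a_{bc}` of the Levi-Civita connection of `g`. -/
def Christoffel (f : ℝ → ℝ) (x : SpacetimePt) (a b c : Fin 4) : ℝ :=
  (1 / 2) * ∑ d : Fin 4, metricgInv f x a d *
    (pd b (fun y => metricg f y d c) x + pd c (fun y => metricg f y d b) x
      - pd d (fun y => metricg f y b c) x)

/-- Components of the 2-form `Q = r dr ∧ dt`. -/
def QKY (x : SpacetimePt) (i j : Fin 4) : ℝ :=
  if i = 1 ∧ j = 0 then x 1 else if i = 0 ∧ j = 1 then -(x 1) else 0

/-- Covariant derivative `(D_a Q)_{bc}`. -/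
def covQ (f : ℝ → ℝ) (x : SpacetimePt) (a b c : Fin 4) : ℝ :=
  pd a (fun y => QKY y b c) x
    - ∑ d : Fin 4, Christoffel f x d a b * QKY x d c
    - ∑ d : Fin 4, Christoffel f x d a c * QKY x b d

/-- The covector `⟨div Q, ·⟩`: `(div Q)_c = g^{ab} (D_a Q)_{bc}`. -/
def divQ (f : ℝ → ℝ) (x : SpacetimePt) (c : Fin 4) : ℝ :=
  ∑ a : Fin 4, ∑ b : Fin 4, metricgInv f x a b * covQ f x a b c

lemma pd_metricg (f : ℝ → ℝ) (hf : Differentiable ℝ f) (x : SpacetimePt)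
    (hfne : f (x 1) ≠ 0) (b d c : Fin 4) :
    pd b (fun y => metricg f y d c) x =
      if b = 1 ∧ d = 0 ∧ c = 0 then -(2 * f (x 1) * deriv f (x 1))
      else if b = 1 ∧ d = 1 ∧ c = 1 then -(2 * deriv f (x 1) / f (x 1) ^ 3)
      else if b = 1 ∧ d = 2 ∧ c = 2 then 2 * x 1
      else if b = 1 ∧ d = 3 ∧ c = 3 then 2 * x 1 * Real.sin (x 2) ^ 2
      else if b = 2 ∧ d = 3 ∧ c = 3 then x 1 ^ 2 * (2 * Real.sin (x 2) * Real.cos (x 2))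
      else 0 := by
  have h2 : HasDerivAt (fun s => (f s) ^ 2) (2 * f (x 1) * deriv f (x 1)) (x 1) := by
    have : HasDerivAt (fun s => f s ^ 2) _ (x 1) := (hf.differentiableAt.hasDerivAt (x := x 1)).pow 2
    convert this using 1; ring
  have h3 : HasDerivAt (fun s => (f s ^ 2)⁻¹) _ (x 1) := h2.inv (pow_ne_zero 2 hfne)
  fin_cases b <;> fin_cases d <;> fin_cases c <;>
    simp [pd, metricg, Function.update] <;>
    first
      | simpa using h2.neg.deriv
      | (rw [h3.deriv]; field_simp)

lemma pd_QKY (x : SpacetimePt) (a b c : Fin 4) :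
    pd a (fun y => QKY y b c) x =
      if a = 1 ∧ b = 1 ∧ c = 0 then 1
      else if a = 1 ∧ b = 0 ∧ c = 1 then -1 else 0 := by
  fin_cases a <;> fin_cases b <;> fin_cases c <;> simp [pd, QKY, Function.update]

lemma christoffel_val (f : ℝ → ℝ) (hdf : Differentiable ℝ f) (x : SpacetimePt)
    (hrne : x 1 ≠ 0) (hfne : f (x 1) ≠ 0) (hsin : Real.sin (x 2) ≠ 0) (a b c : Fin 4) :
    Christoffel f x a b c =
      if a = 0 ∧ ((b = 0 ∧ c = 1) ∨ (b = 1 ∧ c = 0)) then deriv f (x 1) / f (x 1)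
      else if a = 1 ∧ b = 0 ∧ c = 0 then f (x 1) ^ 3 * deriv f (x 1)
      else if a = 1 ∧ b = 1 ∧ c = 1 then -(deriv f (x 1) / f (x 1))
      else if a = 1 ∧ b = 2 ∧ c = 2 then -(x 1 * f (x 1) ^ 2)
      else if a = 1 ∧ b = 3 ∧ c = 3 then -(x 1 * f (x 1) ^ 2 * Real.sin (x 2) ^ 2)
      else if a = 2 ∧ ((b = 1 ∧ c = 2) ∨ (b = 2 ∧ c = 1)) then 1 / x 1
      else if a = 2 ∧ b = 3 ∧ c = 3 then -(Real.sin (x 2) * Real.cos (x 2))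
      else if a = 3 ∧ ((b = 1 ∧ c = 3) ∨ (b = 3 ∧ c = 1)) then 1 / x 1
      else if a = 3 ∧ ((b = 2 ∧ c = 3) ∨ (b = 3 ∧ c = 2)) then
        Real.cos (x 2) / Real.sin (x 2)
      else 0 := by
  fin_cases a <;> fin_cases b <;> fin_cases c <;>
    simp [Christoffel, Fin.sum_univ_four, pd_metricg f hdf x hfne, metricgInv] <;>
    field_simp <;>
    ring

set_option maxHeartbeats 1000000 in
lemma covQ_diag (f : ℝ → ℝ) (hdf : Differentiable ℝ f) (x : SpacetimePt)
    (hrne : x 1 ≠ 0) (hfne : f (x 1) ≠ 0) (hsin : Real.sin (x 2) ≠ 0) (a c : Fin 4) :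
    covQ f x a a c =
      if a = 1 ∧ c = 0 then 1
      else if a = 2 ∧ c = 0 then x 1 ^ 2 * f (x 1) ^ 2
      else if a = 3 ∧ c = 0 then x 1 ^ 2 * f (x 1) ^ 2 * Real.sin (x 2) ^ 2
      else 0 := by
  simp only [covQ, pd_QKY]
  fin_cases a <;> fin_cases c <;>
    simp [Fin.sum_univ_four, christoffel_val f hdf x hrne hfne hsin, QKY] <;>
    ring

/-- In the static spherically symmetric spacetime
`-f(r)² dt² + dr²/f(r)² + r² dS²`, the 2-form `Q = r dr ∧ dt` satisfies
`div Q = -3 ∂/∂t`, i.e. in covector components `(div Q)_c = -3 g_{0c}`. -/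
theorem stmt8 (f : ℝ → ℝ) (hf : ContDiff ℝ (⊤ : ℕ∞) f) (x : SpacetimePt)
    (hr : 0 < x 1) (hfpos : 0 < f (x 1)) (hsin : Real.sin (x 2) ≠ 0) :
    ∀ c : Fin 4, divQ f x c = -3 * metricg f x 0 c := by
  have hdf : Differentiable ℝ f := hf.differentiable (by simp)
  have hfne : f (x 1) ≠ 0 := ne_of_gt hfpos
  have hrne : x 1 ≠ 0 := ne_of_gt hr
  intro c
  fin_cases c <;>
    simp [divQ, Fin.sum_univ_four, covQ_diag f hdf x hrne hfne hsin,
      metricgInv, metricg] <;>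
    field_simp <;>
    ring
end
end
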